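/- arXiv:2306.04363 — 2 statements merged into one kernel-verified Lean document; each statement's English description precedes it below -/
import Mathlib

section
/- With the notation of Algorithm 1 and assuming functions T_k: ℝ → [0,1], define W_{d,k} = (1/2^d) Σ_{u ∈ {0,1}^d} (max_{i ∈ B^d_u} T_k(Y_k^{(i)}) − min_{i ∈ B^d_u} T_k(Y_k^{(i)})). If 1 ≤ d ≤ m and k = (d−1 mod K)+1 (the sorted coordinate), then W_{d,k} ≤ W_{d−1,k}/2. -/
open Finset

theorem Fintype.sum_fin_succ_pi {M β : Type*} [AddCommMonoid M] [Fintype β] {n : ℕ}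
    (f : (Fin (n + 1) → β) → M) :
    ∑ v, f v = ∑ u : Fin n → β, ∑ b, f (Fin.snoc u b) := by
  rw [← (Fin.snocEquiv fun _ => β).sum_comp, Fintype.sum_prod_type, Finset.sum_comm]
  rfl

section Spread

variable {ι α : Type*}

theorem Finset.ciSup_coe_eq_sup' [ConditionallyCompleteLattice α] (s : Finset ι)
    (hs : s.Nonempty) (t : ι → α) : (⨆ i : s, t i) = s.sup' hs t := by
  rw [sup'_eq_csSup_image, iSup]
  congr 1
  ext x
  simp [Set.range, Subtype.exists]

theorem Finset.ciInf_coe_eq_inf' [ConditionallyCompleteLattice α] (s : Finset ι)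
    (hs : s.Nonempty) (t : ι → α) : (⨅ i : s, t i) = s.inf' hs t :=
  ciSup_coe_eq_sup' (α := αᵒᵈ) s hs t

variable [AddCommGroup α]

/-- When every value of `t` on `a` lies below every value on `b`, the ranges `[inf, sup]` of `t`
on `a` and on `b` are disjoint subintervals of its range on `a ∪ b`. -/
theorem Finset.sup'_sub_inf'_add_sup'_sub_inf'_le [LinearOrder α] [IsOrderedAddMonoid α]
    [DecidableEq ι] {a b : Finset ι} (ha : a.Nonempty) (hb : b.Nonempty) {t : ι → α}
    (hab : ∀ i ∈ a, ∀ j ∈ b, t i ≤ t j) :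
    (a.sup' ha t - a.inf' ha t) + (b.sup' hb t - b.inf' hb t) ≤
      (a ∪ b).sup' (ha.mono subset_union_left) t - (a ∪ b).inf' (ha.mono subset_union_left) t := by
  have hsup : b.sup' hb t ≤ (a ∪ b).sup' (ha.mono subset_union_left) t :=
    sup'_mono t subset_union_right hb
  have hinf : (a ∪ b).inf' (ha.mono subset_union_left) t ≤ a.inf' ha t :=
    inf'_mono t subset_union_left ha
  have hsep : a.sup' ha t ≤ b.inf' hb t :=
    sup'_le _ _ fun i hi => le_inf' _ _ fun j hj => hab i hi j hj
  calc (a.sup' ha t - a.inf' ha t) + (b.sup' hb t - b.inf' hb t)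
      = (b.sup' hb t - a.inf' ha t) + (a.sup' ha t - b.inf' hb t) := by abel
    _ ≤ ((a ∪ b).sup' _ t - (a ∪ b).inf' _ t) + 0 :=
        add_le_add (sub_le_sub hsup hinf) (sub_nonpos.2 hsep)
    _ = _ := add_zero _

theorem Finset.ciSup_sub_ciInf_add_ciSup_sub_ciInf_le [ConditionallyCompleteLinearOrder α]
    [IsOrderedAddMonoid α] [DecidableEq ι] {a b : Finset ι} (ha : a.Nonempty)
    (hb : b.Nonempty) {t : ι → α} (hab : ∀ i ∈ a, ∀ j ∈ b, t i ≤ t j) :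
    ((⨆ i : a, t i) - ⨅ i : a, t i) + ((⨆ i : b, t i) - ⨅ i : b, t i) ≤
      (⨆ i : (a ∪ b : Finset ι), t i) - ⨅ i : (a ∪ b : Finset ι), t i := by
  have hab' : (a ∪ b).Nonempty := ha.mono subset_union_left
  simp only [ciSup_coe_eq_sup' _ ha, ciInf_coe_eq_inf' _ ha, ciSup_coe_eq_sup' _ hb,
    ciInf_coe_eq_inf' _ hb, ciSup_coe_eq_sup' _ hab', ciInf_coe_eq_inf' _ hab']
  exact sup'_sub_inf'_add_sup'_sub_inf'_le ha hb hab

end Spread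

theorem stmt_8_general {ι : Type*} [DecidableEq ι] (d : ℕ)
    (Bp : (Fin d → Bool) → Finset ι) (Bc : (Fin (d + 1) → Bool) → Finset ι)
    (t : ι → ℝ)
    (hne : ∀ v : Fin (d + 1) → Bool, (Bc v).Nonempty)
    (hunion : ∀ u : Fin d → Bool, Bc (Fin.snoc u false) ∪ Bc (Fin.snoc u true) = Bp u)
    (hsort : ∀ u : Fin d → Bool,
      ∀ i₀ ∈ Bc (Fin.snoc u false), ∀ i₁ ∈ Bc (Fin.snoc u true), t i₀ ≤ t i₁) :
    (1 / 2 ^ (d + 1) : ℝ) * ∑ v : Fin (d + 1) → Bool,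
        ((⨆ i : (Bc v : Finset ι), t i) - ⨅ i : (Bc v : Finset ι), t i) ≤
      (1 / 2) * ((1 / 2 ^ d : ℝ) * ∑ u : Fin d → Bool,
        ((⨆ i : (Bp u : Finset ι), t i) - ⨅ i : (Bp u : Finset ι), t i)) := by
  have hsum : ∑ v : Fin (d + 1) → Bool,
        ((⨆ i : (Bc v : Finset ι), t i) - ⨅ i : (Bc v : Finset ι), t i) ≤
      ∑ u : Fin d → Bool, ((⨆ i : (Bp u : Finset ι), t i) - ⨅ i : (Bp u : Finset ι), t i) := by
    rw [Fintype.sum_fin_succ_pi]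
    refine sum_le_sum fun u _ => ?_
    rw [Fintype.sum_bool, add_comm, ← hunion u]
    exact ciSup_sub_ciInf_add_ciSup_sub_ciInf_le (hne _) (hne _) (hsort u)
  have hscale : (1 / 2 ^ (d + 1) : ℝ) = 1 / 2 * (1 / 2 ^ d) := by ring
  rw [hscale, mul_assoc]
  gcongr

/-- One level of the recursive sort-and-split of Algorithm 1, for the sorted
coordinate `k = (d-1 mod K)+1`.  The parent sets at level `d` are `Bp u` for
`u : Fin d → Bool`, the child sets at level `d+1` are `Bc v` for
`v : Fin (d+1) → Bool`, and `t i = T_k (Y_k^{(i)})` is the (transformed) sorted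
coordinate of sample `i`. -/
theorem stmt_8 {ι : Type*} [Fintype ι] [DecidableEq ι] (d : ℕ)
    (Bp : (Fin d → Bool) → Finset ι) (Bc : (Fin (d + 1) → Bool) → Finset ι)
    (t : ι → ℝ) (ht : ∀ i, t i ∈ Set.Icc (0 : ℝ) 1)
    (hne : ∀ v : Fin (d + 1) → Bool, (Bc v).Nonempty)
    (hunion : ∀ u : Fin d → Bool, Bc (Fin.snoc u false) ∪ Bc (Fin.snoc u true) = Bp u)
    (hdisj : ∀ u : Fin d → Bool, Disjoint (Bc (Fin.snoc u false)) (Bc (Fin.snoc u true)))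
    (hsort : ∀ u : Fin d → Bool,
      ∀ i₀ ∈ Bc (Fin.snoc u false), ∀ i₁ ∈ Bc (Fin.snoc u true), t i₀ ≤ t i₁) :
    (1 / 2 ^ (d + 1) : ℝ) * ∑ v : Fin (d + 1) → Bool,
        ((⨆ i : (Bc v : Finset ι), t i) - ⨅ i : (Bc v : Finset ι), t i) ≤
      (1 / 2) * ((1 / 2 ^ d : ℝ) * ∑ u : Fin d → Bool,
        ((⨆ i : (Bp u : Finset ι), t i) - ⨅ i : (Bp u : Finset ι), t i)) :=
  stmt_8_general d Bp Bc t hne hunion hsort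
end

section
/- Let M ∈ ℕ and p ∈ (0,1). Let θ ∼ Bernoulli(1/2), and let Y = (Y₁,...,Y_M) with Y_m = (2b_m − 1)U_m(2θ − 1), where b_m ∼ Bernoulli(p) and U_m ∼ Uniform(0,1) are all mutually independent (and independent of θ). Define NB₀ = θ and NB₁ = 1 − θ. Then the nested expectation E_Y[max_{d∈{0,1}} E[NB_d | Y]] − max_{d∈{0,1}} E[NB_d] = E_Y[max_d E[NB_d | Y]] − 1/2 equals I = (1/2) Σ_{m=0}^{M} C(M,m) max(p^{M−m}(1−p)^m, p^m(1−p)^{M−m}) − 1/2. -/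
set_option maxHeartbeats 1000000

open MeasureTheory

/-- The Bernoulli distribution on `ℝ` with success probability `q`,
i.e. mass `q` at `1` and mass `1 - q` at `0`. -/
noncomputable def bernoulliReal (q : ENNReal) : Measure ℝ :=
  q • Measure.dirac 1 + (1 - q) • Measure.dirac 0
namespace EVSI15

/-! ### Auxiliary definitions -/

noncomputable def unif : Measure ℝ := volume.restrict (Set.Ioc 0 1)

noncomputable def Piu (M : ℕ) : Measure (Fin M → ℝ) := Measure.pi fun _ => unif

instance : IsProbabilityMeasure unif := by
  constructor
  simp [unif, Real.volume_Ioc]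

instance (M : ℕ) : IsProbabilityMeasure (Piu M) := by
  unfold Piu; infer_instance

lemma bern_prob {q : ENNReal} (hq : q ≤ 1) : IsProbabilityMeasure (bernoulliReal q) := by
  constructor
  simp only [bernoulliReal, Measure.add_apply, Measure.smul_apply,
    Measure.dirac_apply' _ MeasurableSet.univ, Set.indicator_univ, Pi.one_apply, smul_eq_mul,
    mul_one]
  rw [add_comm]
  exact tsub_add_cancel_of_le hq

def Xb {M : ℕ} (s : Fin M → Bool) : Fin M → ℝ := fun k => if s k then 1 else 0

noncomputable def W (p : ℝ) {M : ℕ} (s : Fin M → Bool) : ENNReal :=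
  ∏ k, ENNReal.ofReal (if s k then p else 1 - p)

noncomputable def wR (p : ℝ) {M : ℕ} (s : Fin M → Bool) : ℝ :=
  ∏ k, (if s k then p else 1 - p)

def cnt {M : ℕ} (s : Fin M → Bool) : ℕ := (Finset.univ.filter (fun k => s k = true)).card

noncomputable def cpos {M : ℕ} (y : Fin M → ℝ) : ℕ :=
  (Finset.univ.filter (fun k => 0 < y k)).card

lemma W_toReal {p : ℝ} (h0 : 0 ≤ p) (h1 : p ≤ 1) {M : ℕ} (s : Fin M → Bool) :
    (W p s).toReal = wR p s := by
  rw [W, wR, ENNReal.toReal_prod]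
  refine Finset.prod_congr rfl fun k _ => ?_
  rcases Bool.eq_false_or_eq_true (s k) with h | h <;>
    simp [h, ENNReal.toReal_ofReal, h0, sub_nonneg.2 h1]

lemma W_ne_top (p : ℝ) {M : ℕ} (s : Fin M → Bool) : W p s ≠ ⊤ := by
  rw [W]
  exact ENNReal.prod_ne_top fun k _ => ENNReal.ofReal_ne_top

lemma wR_eq {p : ℝ} {M : ℕ} (s : Fin M → Bool) :
    wR p s = p ^ cnt s * (1 - p) ^ (M - cnt s) := by
  classical
  rw [wR, Finset.prod_ite, Finset.prod_const, Finset.prod_const, cnt]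
  have h2 := Finset.card_filter_add_card_filter_not
    (s := (Finset.univ : Finset (Fin M))) (p := fun k => s k = true)
  simp only [Finset.card_univ, Fintype.card_fin] at h2
  have hcard : (Finset.filter (fun x => ¬s x = true) Finset.univ).card
      = M - (Finset.filter (fun k => s k = true) Finset.univ).card := by omega
  rw [hcard]

lemma cnt_le {M : ℕ} (s : Fin M → Bool) : cnt s ≤ M := by
  classical
  calc cnt s ≤ (Finset.univ : Finset (Fin M)).card := Finset.card_filter_le _ _
  _ = M := by simp

lemma cnt_not {M : ℕ} (s : Fin M → Bool) : cnt (fun k => !(s k)) = M - cnt s := by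
  classical
  have h : (Finset.univ.filter fun k => (!(s k)) = true) =
      (Finset.univ.filter fun k => ¬(s k = true)) := by
    apply Finset.filter_congr
    intro k _
    simp
  have h2 := Finset.card_filter_add_card_filter_not
    (s := (Finset.univ : Finset (Fin M))) (p := fun k => s k = true)
  simp only [Finset.card_univ, Fintype.card_fin] at h2
  rw [cnt, cnt, h]
  omega

/-! ### Measure decomposition -/

lemma smul_prod {α β : Type*} [MeasurableSpace α] [MeasurableSpace β] (c : ENNReal)
    (μ : Measure α) (ν : Measure β) [SFinite μ] [SFinite ν] :
    (c • μ).prod ν = c • (μ.prod ν) := by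
  ext s hs
  rw [Measure.prod_apply hs, Measure.smul_apply, Measure.prod_apply hs, lintegral_smul_measure]

lemma bern_apply {q : ℝ} (h0 : 0 ≤ q) {A : Set ℝ} (hA : MeasurableSet A) :
    bernoulliReal (ENNReal.ofReal q) A =
      ∑ j : Bool, ENNReal.ofReal (if j then q else 1 - q) *
        A.indicator 1 (if j then (1 : ℝ) else 0) := by
  have h : (1 : ENNReal) - ENNReal.ofReal q = ENNReal.ofReal (1 - q) := by
    rw [ENNReal.ofReal_sub 1 h0, ENNReal.ofReal_one]
  simp [bernoulliReal, Measure.add_apply, Measure.smul_apply, Measure.dirac_apply' _ hA, h,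
    Fintype.sum_bool, smul_eq_mul, add_comm]

lemma pi_bern_eq (M : ℕ) (q : ℝ) (h0 : 0 ≤ q) (h1 : q ≤ 1) :
    (Measure.pi fun _ : Fin M => bernoulliReal (ENNReal.ofReal q)) =
      ∑ s : Fin M → Bool, (∏ k, ENNReal.ofReal (if s k then q else 1 - q)) •
        Measure.dirac (fun k => if s k then (1 : ℝ) else 0) := by
  classical
  haveI : IsProbabilityMeasure (bernoulliReal (ENNReal.ofReal q)) :=
    bern_prob (ENNReal.ofReal_le_one.2 h1)
  refine Measure.pi_eq fun ts hts => ?_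
  rw [Measure.finset_sum_apply]
  have hbox : MeasurableSet (Set.univ.pi ts) := MeasurableSet.univ_pi hts
  calc
    ∑ s : Fin M → Bool, ((∏ k, ENNReal.ofReal (if s k then q else 1 - q)) •
        Measure.dirac (fun k => if s k then (1 : ℝ) else 0)) (Set.univ.pi ts)
      = ∑ s : Fin M → Bool, ∏ k, (ENNReal.ofReal (if s k then q else 1 - q) *
          (ts k).indicator 1 (if s k then (1 : ℝ) else 0)) := by
        refine Finset.sum_congr rfl fun s _ => ?_
        rw [Measure.smul_apply, Measure.dirac_apply' _ hbox, Finset.prod_mul_distrib]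
        congr 1
        rw [Set.indicator_apply]
        simp only [Set.indicator_apply, Pi.one_apply]
        rw [Finset.prod_boole]
        by_cases h : (fun k => if s k = true then (1:ℝ) else 0) ∈ Set.univ.pi ts
        · rw [if_pos h, if_pos]
          intro i _
          exact Set.mem_univ_pi.1 h i
        · rw [if_neg h, if_neg]
          intro hcon
          exact h (Set.mem_univ_pi.2 fun i => hcon i (Finset.mem_univ i))
    _ = ∏ k, ∑ j : Bool, (ENNReal.ofReal (if j then q else 1 - q) *
          (ts k).indicator 1 (if j then (1 : ℝ) else 0)) :=
        (Fintype.prod_sum (fun k (j : Bool) => ENNReal.ofReal (if j then q else 1 - q) *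
          (ts k).indicator 1 (if j then (1 : ℝ) else 0))).symm
    _ = ∏ k, bernoulliReal (ENNReal.ofReal q) (ts k) := by
        refine Finset.prod_congr rfl fun k _ => (bern_apply h0 (hts k)).symm

noncomputable def rho (M : ℕ) (p : ℝ) : Measure ((Fin M → ℝ) × (Fin M → ℝ)) :=
  (Measure.pi fun _ : Fin M => bernoulliReal (ENNReal.ofReal p)).prod (Piu M)

noncomputable def P (M : ℕ) (p : ℝ) : Measure (ℝ × (Fin M → ℝ) × (Fin M → ℝ)) :=
  (bernoulliReal (1 / 2)).prod (rho M p)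

lemma rho_eq (M : ℕ) {p : ℝ} (hp : p ∈ Set.Ioo (0 : ℝ) 1) :
    rho M p = ∑ s : Fin M → Bool, W p s • Measure.map (Prod.mk (Xb s)) (Piu M) := by
  haveI : IsProbabilityMeasure (bernoulliReal (ENNReal.ofReal p)) :=
    bern_prob (ENNReal.ofReal_le_one.2 hp.2.le)
  rw [rho, pi_bern_eq M p hp.1.le hp.2.le, ← Measure.sum_fintype, Measure.prod_sum_left,
    Measure.sum_fintype]
  refine Finset.sum_congr rfl fun s _ => ?_
  rw [smul_prod, Measure.dirac_prod]
  rfl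

lemma integrable_of_bdd {α : Type*} [MeasurableSpace α] {ν : Measure α} [IsFiniteMeasure ν]
    {f : α → ℝ} (hf : AEStronglyMeasurable f ν) {C : ℝ} (h : ∀ x, |f x| ≤ C) :
    Integrable f ν := by
  refine (integrable_const C).mono' hf (ae_of_all _ fun x => ?_)
  rw [Real.norm_eq_abs]
  exact h x

lemma integral_rho (M : ℕ) {p : ℝ} (hp : p ∈ Set.Ioo (0 : ℝ) 1)
    (f : (Fin M → ℝ) × (Fin M → ℝ) → ℝ) (hf : Measurable f) (C : ℝ) (hC : ∀ x, |f x| ≤ C) :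
    ∫ x, f x ∂rho M p = ∑ s : Fin M → Bool, wR p s * ∫ u, f (Xb s, u) ∂Piu M := by
  rw [rho_eq M hp]
  rw [integral_finset_sum_measure (fun s _ => ?_)]
  · refine Finset.sum_congr rfl fun s _ => ?_
    rw [integral_smul_measure, W_toReal hp.1.le hp.2.le, smul_eq_mul,
      integral_map measurable_prodMk_left.aemeasurable hf.aestronglyMeasurable]
  · haveI : IsProbabilityMeasure (Measure.map (Prod.mk (Xb s)) (Piu M)) :=
      Measure.isProbabilityMeasure_map measurable_prodMk_left.aemeasurable
    exact (integrable_of_bdd hf.aestronglyMeasurable hC).smul_measure (W_ne_top p s)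

lemma bern_half_eq : bernoulliReal (1 / 2) =
    (1 / 2 : ENNReal) • Measure.dirac (1 : ℝ) + (1 / 2 : ENNReal) • Measure.dirac (0 : ℝ) := by
  have : (1 : ENNReal) - 1 / 2 = 1 / 2 := by
    rw [ENNReal.sub_eq_of_eq_add (by simp)]
    rw [ENNReal.add_halves]
  rw [bernoulliReal, this]

lemma integral_P (M : ℕ) {p : ℝ} (hp : p ∈ Set.Ioo (0 : ℝ) 1)
    (f : ℝ × (Fin M → ℝ) × (Fin M → ℝ) → ℝ) (hf : Measurable f) (C : ℝ) (hC : ∀ x, |f x| ≤ C) :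
    ∫ x, f x ∂P M p = 2⁻¹ * ∑ s : Fin M → Bool, wR p s *
      ((∫ u, f (1, Xb s, u) ∂Piu M) + ∫ u, f (0, Xb s, u) ∂Piu M) := by
  haveI : IsProbabilityMeasure (bernoulliReal (ENNReal.ofReal p)) :=
    bern_prob (ENNReal.ofReal_le_one.2 hp.2.le)
  haveI : IsProbabilityMeasure (rho M p) := by unfold rho; infer_instance
  haveI h1 : IsProbabilityMeasure (Measure.map (Prod.mk (1:ℝ)) (rho M p)) :=
    Measure.isProbabilityMeasure_map measurable_prodMk_left.aemeasurable
  haveI h0 : IsProbabilityMeasure (Measure.map (Prod.mk (0:ℝ)) (rho M p)) :=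
    Measure.isProbabilityMeasure_map measurable_prodMk_left.aemeasurable
  have key : P M p = (1 / 2 : ENNReal) • Measure.map (Prod.mk (1:ℝ)) (rho M p) +
      (1 / 2 : ENNReal) • Measure.map (Prod.mk (0:ℝ)) (rho M p) := by
    rw [P, bern_half_eq, Measure.add_prod, smul_prod, smul_prod, Measure.dirac_prod,
      Measure.dirac_prod]
  rw [key, integral_add_measure
      (((integrable_of_bdd hf.aestronglyMeasurable hC).smul_measure (by simp)))
      (((integrable_of_bdd hf.aestronglyMeasurable hC).smul_measure (by simp))),
    integral_smul_measure, integral_smul_measure,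
    integral_map measurable_prodMk_left.aemeasurable hf.aestronglyMeasurable,
    integral_map measurable_prodMk_left.aemeasurable hf.aestronglyMeasurable]
  have hf1 : Measurable (fun y : (Fin M → ℝ) × (Fin M → ℝ) => f (1, y)) :=
    hf.comp measurable_prodMk_left
  have hf0 : Measurable (fun y : (Fin M → ℝ) × (Fin M → ℝ) => f (0, y)) :=
    hf.comp measurable_prodMk_left
  rw [integral_rho M hp _ hf1 C (fun x => hC _), integral_rho M hp _ hf0 C (fun x => hC _)]
  have ht : ((1:ENNReal)/2).toReal = (2:ℝ)⁻¹ := by simp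
  rw [ht, smul_eq_mul, smul_eq_mul, ← mul_add, ← Finset.sum_add_distrib]
  congr 1
  refine Finset.sum_congr rfl fun s _ => ?_
  ring

/-! ### posterior weights -/

noncomputable def r (M : ℕ) (p : ℝ) (c : ℕ) : ℝ :=
  p ^ c * (1 - p) ^ (M - c) / (p ^ c * (1 - p) ^ (M - c) + p ^ (M - c) * (1 - p) ^ c)

noncomputable def g (M : ℕ) (p : ℝ) (y : Fin M → ℝ) : ℝ := r M p (cpos y)

lemma denom_pos {p : ℝ} (hp : p ∈ Set.Ioo (0 : ℝ) 1) (M c : ℕ) :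
    0 < p ^ c * (1 - p) ^ (M - c) + p ^ (M - c) * (1 - p) ^ c := by
  have h1 : 0 < p := hp.1
  have h2 : 0 < 1 - p := by linarith [hp.2]
  positivity

lemma r_nonneg {p : ℝ} (hp : p ∈ Set.Ioo (0 : ℝ) 1) (M c : ℕ) : 0 ≤ r M p c := by
  have h1 : 0 < p := hp.1
  have h2 : 0 < 1 - p := by linarith [hp.2]
  rw [r]
  positivity

lemma r_le_one {p : ℝ} (hp : p ∈ Set.Ioo (0 : ℝ) 1) (M c : ℕ) : r M p c ≤ 1 := by
  have h1 : 0 < p := hp.1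
  have h2 : 0 < 1 - p := by linarith [hp.2]
  rw [r, div_le_one (denom_pos hp M c)]
  nlinarith [pow_pos h1 c, pow_pos h1 (M - c), pow_pos h2 c, pow_pos h2 (M - c),
    mul_pos (pow_pos h1 (M - c)) (pow_pos h2 c)]

lemma r_abs_le {p : ℝ} (hp : p ∈ Set.Ioo (0 : ℝ) 1) (M c : ℕ) : |r M p c| ≤ 1 := by
  rw [abs_le]
  constructor
  · linarith [r_nonneg hp M c]
  · exact r_le_one hp M c

lemma one_sub_r {p : ℝ} (hp : p ∈ Set.Ioo (0 : ℝ) 1) (M c : ℕ) :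
    1 - r M p c = p ^ (M - c) * (1 - p) ^ c /
      (p ^ c * (1 - p) ^ (M - c) + p ^ (M - c) * (1 - p) ^ c) := by
  have hD := denom_pos hp M c
  rw [r]
  field_simp
  ring

lemma r_key {p : ℝ} (hp : p ∈ Set.Ioo (0 : ℝ) 1) (M c : ℕ) :
    r M p c * (p ^ c * (1 - p) ^ (M - c) + p ^ (M - c) * (1 - p) ^ c) =
      p ^ c * (1 - p) ^ (M - c) := by
  have hD := denom_pos hp M c
  rw [r]
  field_simp

lemma r_max {p : ℝ} (hp : p ∈ Set.Ioo (0 : ℝ) 1) (M c : ℕ) :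
    (p ^ c * (1 - p) ^ (M - c) + p ^ (M - c) * (1 - p) ^ c) *
      max (r M p c) (1 - r M p c) =
      max (p ^ c * (1 - p) ^ (M - c)) (p ^ (M - c) * (1 - p) ^ c) := by
  have hD := denom_pos hp M c
  rw [one_sub_r hp, r, mul_max_of_nonneg _ _ hD.le, mul_div_cancel₀ _ hD.ne',
    mul_div_cancel₀ _ hD.ne']

/-! ### measurability -/

lemma measurable_cpos (M : ℕ) : Measurable (cpos (M := M)) := by
  classical
  have h : (cpos (M := M)) = fun y => ∑ k, if 0 < y k then 1 else 0 := by
    funext y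
    rw [cpos, Finset.card_filter]
  rw [h]
  refine Finset.measurable_sum _ fun k _ => Measurable.ite ?_ measurable_const measurable_const
  exact measurableSet_lt measurable_const (measurable_pi_apply k)

lemma measurable_g (M : ℕ) (p : ℝ) : Measurable (g M p) :=
  (measurable_from_nat (f := r M p)).comp (measurable_cpos M)

/-! ### the box -/

def box (M : ℕ) : Set (Fin M → ℝ) := Set.univ.pi fun _ => Set.Ioc 0 1

lemma box_meas (M : ℕ) : MeasurableSet (box M) :=
  MeasurableSet.univ_pi fun _ => measurableSet_Ioc

lemma box_ae (M : ℕ) : ∀ᵐ u ∂Piu M, u ∈ box M := by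
  rw [ae_iff]
  have h : {u : Fin M → ℝ | ¬u ∈ box M} = (box M)ᶜ := rfl
  rw [h, prob_compl_eq_zero_iff (box_meas M)]
  rw [Piu, box, Measure.pi_pi]
  simp [unif, Real.volume_Ioc]

lemma slice_congr {M : ℕ} {F G : (Fin M → ℝ) → ℝ} (h : ∀ u ∈ box M, F u = G u) :
    ∫ u, F u ∂Piu M = ∫ u, G u ∂Piu M := by
  refine integral_congr_ae ?_
  filter_upwards [box_ae M] with u hu
  exact h u hu

lemma integral_const_piu (M : ℕ) (c : ℝ) : ∫ _, c ∂Piu M = c := by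
  simp

/-! ### sign patterns -/

def Emap {M : ℕ} (s : Fin M → Bool) (u : Fin M → ℝ) : Fin M → ℝ :=
  fun k => if s k then u k else -u k

lemma sgn_one {M : ℕ} (s : Fin M → Bool) (u : Fin M → ℝ) :
    (fun k => (2 * Xb s k - 1) * u k * (2 * (1:ℝ) - 1)) = Emap s u := by
  funext k
  rcases Bool.eq_false_or_eq_true (s k) with h | h <;> simp [Xb, Emap, h] <;> ring

lemma sgn_zero {M : ℕ} (s : Fin M → Bool) (u : Fin M → ℝ) :
    (fun k => (2 * Xb s k - 1) * u k * (2 * (0:ℝ) - 1)) = Emap (fun k => !(s k)) u := by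
  funext k
  rcases Bool.eq_false_or_eq_true (s k) with h | h <;> simp [Xb, Emap, h] <;> ring

lemma cpos_Emap {M : ℕ} (s : Fin M → Bool) {u : Fin M → ℝ} (hu : u ∈ box M) :
    cpos (Emap s u) = cnt s := by
  classical
  rw [cpos, cnt]
  congr 1
  apply Finset.filter_congr
  intro k _
  have hu0 : 0 < u k := (hu k (Set.mem_univ k)).1
  rcases Bool.eq_false_or_eq_true (s k) with h | h <;> simp [Emap, h, hu0]
  · linarith

/-! ### sum reindexing and counting -/

lemma sum_not {M : ℕ} (f : (Fin M → Bool) → ℝ) :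
    ∑ s : Fin M → Bool, f (fun k => !(s k)) = ∑ s : Fin M → Bool, f s := by
  refine Fintype.sum_bijective (fun s : Fin M → Bool => fun k => !(s k)) ?_ _ _ fun s => rfl
  have hinv : Function.Involutive (fun s : Fin M → Bool => fun k => !(s k)) := by
    intro s; funext k; simp
  exact hinv.bijective

lemma sum_cnt (M : ℕ) (F : ℕ → ℝ) :
    ∑ s : Fin M → Bool, F (cnt s) = ∑ m ∈ Finset.range (M + 1), (M.choose m : ℝ) * F m := by
  classical
  have h1 : ∑ t : Finset (Fin M), F t.card = ∑ s : Fin M → Bool, F (cnt s) := by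
    refine Fintype.sum_bijective
      (fun t : Finset (Fin M) => (fun k => decide (k ∈ t) : Fin M → Bool)) ?_ _ _ fun t => ?_
    · constructor
      · intro a b h
        ext k
        have := congrFun h k
        simpa using this
      · intro s
        refine ⟨Finset.univ.filter (fun k => s k = true), ?_⟩
        funext k
        simp
    · congr 1
      rw [cnt]
      congr 1
      ext k
      simp
  rw [← h1]
  have h2 : (Finset.univ : Finset (Finset (Fin M))) = Finset.univ.powerset := by
    rw [Finset.powerset_univ]
  rw [h2, Finset.sum_powerset]
  have hM : (Finset.univ : Finset (Fin M)).card = M := by simp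
  rw [hM]
  refine Finset.sum_congr rfl fun m hm => ?_
  have : ∀ t ∈ Finset.powersetCard m (Finset.univ : Finset (Fin M)), F t.card = F m := by
    intro t ht
    rw [(Finset.mem_powersetCard.1 ht).2]
  rw [Finset.sum_congr rfl this, Finset.sum_const, Finset.card_powersetCard, hM]
  simp [mul_comm]

/-! ### the sign map and truncation -/

def sgnF (M : ℕ) : ℝ × (Fin M → ℝ) × (Fin M → ℝ) → (Fin M → ℝ) :=
  fun x k => (2 * x.2.1 k - 1) * x.2.2 k * (2 * x.1 - 1)

lemma measurable_sgnF (M : ℕ) : Measurable (sgnF M) := by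
  refine measurable_pi_lambda _ fun k => ?_
  refine Measurable.mul (Measurable.mul ?_ ?_) ?_
  · exact (measurable_const.mul
      ((measurable_pi_apply k).comp (measurable_fst.comp measurable_snd))).sub measurable_const
  · exact (measurable_pi_apply k).comp (measurable_snd.comp measurable_snd)
  · exact (measurable_const.mul measurable_fst).sub measurable_const

lemma sgnF_one {M : ℕ} (s : Fin M → Bool) (u : Fin M → ℝ) :
    sgnF M ((1 : ℝ), Xb s, u) = Emap s u := by
  funext k
  rcases Bool.eq_false_or_eq_true (s k) with h | h <;> simp [sgnF, Xb, Emap, h] <;> ring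

lemma sgnF_zero {M : ℕ} (s : Fin M → Bool) (u : Fin M → ℝ) :
    sgnF M ((0 : ℝ), Xb s, u) = Emap (fun k => !(s k)) u := by
  funext k
  rcases Bool.eq_false_or_eq_true (s k) with h | h <;> simp [sgnF, Xb, Emap, h] <;> ring

noncomputable def trunc (t : ℝ) : ℝ := min 1 (max 0 t)

lemma measurable_trunc : Measurable trunc :=
  (measurable_const.min (measurable_const.max measurable_id))

lemma trunc_one : trunc 1 = 1 := by norm_num [trunc]

lemma trunc_zero : trunc 0 = 0 := by norm_num [trunc]

lemma trunc_abs_le (t : ℝ) : |trunc t| ≤ 1 := by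
  rw [trunc, abs_le]
  constructor
  · have : (0:ℝ) ≤ max 0 t := le_max_left 0 t
    have h2 : min 1 (max 0 t) = 1 ∨ min 1 (max 0 t) = max 0 t := min_choice _ _
    rcases h2 with h | h <;> rw [h] <;> linarith
  · exact min_le_left _ _

lemma trunc_mem {t : ℝ} (h : t ∈ ({0, 1} : Set ℝ)) : trunc t = t := by
  rcases h with h | h <;> rw [h]
  · exact trunc_zero
  · exact trunc_one

/-! ### properties of the half Bernoulli -/

lemma P_fst (M : ℕ) {p : ℝ} (hp : p ∈ Set.Ioo (0 : ℝ) 1) :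
    Measure.map Prod.fst (P M p) = bernoulliReal (1 / 2) := by
  haveI : IsProbabilityMeasure (bernoulliReal (ENNReal.ofReal p)) :=
    bern_prob (ENNReal.ofReal_le_one.2 hp.2.le)
  haveI : IsProbabilityMeasure (rho M p) := by unfold rho; infer_instance
  rw [P, Measure.map_fst_prod, measure_univ, one_smul]

lemma pair_meas : MeasurableSet ({0, 1} : Set ℝ) :=
  (measurableSet_singleton 1).insert 0

lemma bern_half_compl : bernoulliReal (1 / 2) (({0, 1} : Set ℝ)ᶜ) = 0 := by
  have hm : MeasurableSet (({0, 1} : Set ℝ)ᶜ) := pair_meas.compl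
  rw [bern_half_eq, Measure.add_apply, Measure.smul_apply, Measure.smul_apply,
    Measure.dirac_apply' _ hm, Measure.dirac_apply' _ hm]
  have h1 : (1 : ℝ) ∈ ({0, 1} : Set ℝ) := by norm_num
  have h0 : (0 : ℝ) ∈ ({0, 1} : Set ℝ) := by norm_num
  rw [Set.indicator_of_notMem (by simpa using h1), Set.indicator_of_notMem (by simpa using h0)]
  simp

lemma bern_half_int : ∫ t, t ∂bernoulliReal (1 / 2) = 1 / 2 := by
  have h1 : ∀ a : ℝ, Integrable (fun t : ℝ => t) (Measure.dirac a) := by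
    intro a
    constructor
    · exact measurable_id.aestronglyMeasurable
    · rw [HasFiniteIntegral, MeasureTheory.lintegral_dirac]
      simp
  rw [bern_half_eq, integral_add_measure ((h1 1).smul_measure (by simp))
      ((h1 0).smul_measure (by simp)),
    integral_smul_measure, integral_smul_measure, integral_dirac, integral_dirac]
  norm_num

/-! ### the key set-integral identity -/

lemma key_int (M : ℕ) {p : ℝ} (hp : p ∈ Set.Ioo (0 : ℝ) 1) {A : Set (Fin M → ℝ)}
    (hA : MeasurableSet A) :
    ∫ x, A.indicator (g M p) (sgnF M x) ∂P M p
      = ∫ x, A.indicator (fun _ => (1 : ℝ)) (sgnF M x) * trunc x.1 ∂P M p := by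
  classical
  have hgb : ∀ y, |A.indicator (g M p) y| ≤ 1 := fun y => by
    by_cases h : y ∈ A
    · rw [Set.indicator_of_mem h]
      exact r_abs_le hp M _
    · simp [Set.indicator_of_notMem h]
  have hib : ∀ y, |A.indicator (fun _ => (1 : ℝ)) y| ≤ 1 := fun y => by
    by_cases h : y ∈ A <;> simp [h]
  have hf1m : Measurable fun x : ℝ × (Fin M → ℝ) × (Fin M → ℝ) =>
      A.indicator (g M p) (sgnF M x) :=
    ((measurable_g M p).indicator hA).comp (measurable_sgnF M)
  have hf2m : Measurable fun x : ℝ × (Fin M → ℝ) × (Fin M → ℝ) =>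
      A.indicator (fun _ => (1 : ℝ)) (sgnF M x) * trunc x.1 :=
    ((measurable_const.indicator hA).comp (measurable_sgnF M)).mul
      (measurable_trunc.comp measurable_fst)
  rw [integral_P M hp _ hf1m 1 (fun x => hgb _),
    integral_P M hp _ hf2m 1 (fun x => by
      rw [abs_mul]
      exact mul_le_one₀ (hib _) (abs_nonneg _) (trunc_abs_le _))]
  set J : (Fin M → Bool) → ℝ :=
    fun s => ∫ u, A.indicator (fun _ => (1 : ℝ)) (Emap s u) ∂Piu M with hJ
  have hind : ∀ (σ : Fin M → Bool), ∀ u ∈ box M,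
      A.indicator (g M p) (Emap σ u) =
        r M p (cnt σ) * A.indicator (fun _ => (1 : ℝ)) (Emap σ u) := by
    intro σ u hu
    by_cases h : Emap σ u ∈ A
    · rw [Set.indicator_of_mem h, Set.indicator_of_mem h, g, cpos_Emap σ hu, mul_one]
    · simp [Set.indicator_of_notMem h]
  have hslice1 : ∀ s : Fin M → Bool,
      (∫ u, A.indicator (g M p) (sgnF M ((1:ℝ), Xb s, u)) ∂Piu M) = r M p (cnt s) * J s := by
    intro s
    have he : (fun u => A.indicator (g M p) (sgnF M ((1:ℝ), Xb s, u)))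
        = fun u => A.indicator (g M p) (Emap s u) := by
      funext u; rw [sgnF_one]
    rw [he, slice_congr (hind s), integral_const_mul]
  have hslice0 : ∀ s : Fin M → Bool,
      (∫ u, A.indicator (g M p) (sgnF M ((0:ℝ), Xb s, u)) ∂Piu M)
        = r M p (cnt fun k => !(s k)) * J (fun k => !(s k)) := by
    intro s
    have he : (fun u => A.indicator (g M p) (sgnF M ((0:ℝ), Xb s, u)))
        = fun u => A.indicator (g M p) (Emap (fun k => !(s k)) u) := by
      funext u; rw [sgnF_zero]
    rw [he, slice_congr (hind _), integral_const_mul]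
  have hslice1' : ∀ s : Fin M → Bool,
      (∫ u, A.indicator (fun _ => (1:ℝ)) (sgnF M ((1:ℝ), Xb s, u)) * trunc (1:ℝ) ∂Piu M)
        = J s := by
    intro s
    have he : (fun u => A.indicator (fun _ => (1:ℝ)) (sgnF M ((1:ℝ), Xb s, u)) * trunc (1:ℝ))
        = fun u => A.indicator (fun _ => (1:ℝ)) (Emap s u) := by
      funext u; rw [sgnF_one, trunc_one, mul_one]
    rw [he]
  have hslice0' : ∀ s : Fin M → Bool,
      (∫ u, A.indicator (fun _ => (1:ℝ)) (sgnF M ((0:ℝ), Xb s, u)) * trunc (0:ℝ) ∂Piu M)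
        = 0 := by
    intro s
    have he : (fun u => A.indicator (fun _ => (1:ℝ)) (sgnF M ((0:ℝ), Xb s, u)) * trunc (0:ℝ))
        = fun _ => (0:ℝ) := by
      funext u; rw [trunc_zero, mul_zero]
    rw [he, integral_zero]
  simp only [hslice1, hslice0, hslice1', hslice0']
  congr 1
  simp only [mul_add, Finset.sum_add_distrib, add_zero]
  have hre : ∑ s : Fin M → Bool, wR p s * (r M p (cnt fun k => !(s k)) * J (fun k => !(s k)))
      = ∑ s : Fin M → Bool, wR p (fun k => !(s k)) * (r M p (cnt s) * J s) := by
    rw [← sum_not (f := fun σ => wR p (fun k => !(σ k)) * (r M p (cnt σ) * J σ))]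
    simp only [Bool.not_not]
  rw [hre, ← Finset.sum_add_distrib]
  refine Finset.sum_congr rfl fun s _ => ?_
  have hle := cnt_le s
  have hkey := r_key hp M (cnt s)
  rw [wR_eq, wR_eq (s := fun k => !(s k)), cnt_not]
  have hmm : M - (M - cnt s) = cnt s := by omega
  rw [hmm]
  linear_combination J s * hkey

/-! ### the final integral -/

lemma final_int (M : ℕ) {p : ℝ} (hp : p ∈ Set.Ioo (0 : ℝ) 1) :
    ∫ x, max (g M p (sgnF M x)) (1 - g M p (sgnF M x)) ∂P M p
      = 2⁻¹ * ∑ m ∈ Finset.range (M + 1), (M.choose m : ℝ) *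
          max (p ^ (M - m) * (1 - p) ^ m) (p ^ m * (1 - p) ^ (M - m)) := by
  classical
  have hb : ∀ y : Fin M → ℝ, |max (g M p y) (1 - g M p y)| ≤ 1 := fun y => by
    have h1 := r_nonneg hp M (cpos y)
    have h2 := r_le_one hp M (cpos y)
    rw [g, abs_le]
    constructor
    · have := le_max_left (r M p (cpos y)) (1 - r M p (cpos y))
      linarith
    · exact max_le h2 (by linarith)
  have hm : Measurable fun x : ℝ × (Fin M → ℝ) × (Fin M → ℝ) =>
      max (g M p (sgnF M x)) (1 - g M p (sgnF M x)) :=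
    (((measurable_g M p).max (measurable_const.sub (measurable_g M p))).comp (measurable_sgnF M))
  rw [integral_P M hp _ hm 1 (fun x => hb _)]
  have hs1 : ∀ s : Fin M → Bool,
      (∫ u, max (g M p (sgnF M ((1:ℝ), Xb s, u))) (1 - g M p (sgnF M ((1:ℝ), Xb s, u))) ∂Piu M)
        = max (r M p (cnt s)) (1 - r M p (cnt s)) := by
    intro s
    rw [slice_congr (G := fun _ => max (r M p (cnt s)) (1 - r M p (cnt s))) ?_,
      integral_const_piu]
    intro u hu
    rw [sgnF_one, g, cpos_Emap s hu]
  have hs0 : ∀ s : Fin M → Bool,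
      (∫ u, max (g M p (sgnF M ((0:ℝ), Xb s, u))) (1 - g M p (sgnF M ((0:ℝ), Xb s, u))) ∂Piu M)
        = max (r M p (cnt fun k => !(s k))) (1 - r M p (cnt fun k => !(s k))) := by
    intro s
    rw [slice_congr (G := fun _ => max (r M p (cnt fun k => !(s k)))
        (1 - r M p (cnt fun k => !(s k)))) ?_, integral_const_piu]
    intro u hu
    rw [sgnF_zero, g, cpos_Emap _ hu]
  simp only [hs1, hs0]
  congr 1
  simp only [mul_add, Finset.sum_add_distrib]
  have hre : ∑ s : Fin M → Bool, wR p s *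
        max (r M p (cnt fun k => !(s k))) (1 - r M p (cnt fun k => !(s k)))
      = ∑ s : Fin M → Bool, wR p (fun k => !(s k)) * max (r M p (cnt s)) (1 - r M p (cnt s)) := by
    rw [← sum_not (f := fun σ => wR p (fun k => !(σ k)) *
      max (r M p (cnt σ)) (1 - r M p (cnt σ)))]
    simp only [Bool.not_not]
  rw [hre, ← Finset.sum_add_distrib]
  have hterm : ∀ s : Fin M → Bool,
      wR p s * max (r M p (cnt s)) (1 - r M p (cnt s)) +
        wR p (fun k => !(s k)) * max (r M p (cnt s)) (1 - r M p (cnt s))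
      = max (p ^ cnt s * (1 - p) ^ (M - cnt s)) (p ^ (M - cnt s) * (1 - p) ^ cnt s) := by
    intro s
    have hle := cnt_le s
    have hkey := r_max hp M (cnt s)
    rw [wR_eq, wR_eq (s := fun k => !(s k)), cnt_not]
    have hmm : M - (M - cnt s) = cnt s := by omega
    rw [hmm]
    linear_combination hkey
  rw [Finset.sum_congr rfl fun s _ => hterm s]
  rw [sum_cnt M (fun c => max (p ^ c * (1 - p) ^ (M - c)) (p ^ (M - c) * (1 - p) ^ c))]
  refine Finset.sum_congr rfl fun m _ => ?_
  rw [max_comm]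

end EVSI15

open EVSI15 in
/-- EVSI for the simple test case (Problem 1): `θ ~ Bernoulli(1/2)`,
`Y_m = (2 b_m - 1) U_m (2θ - 1)` with `b_m ~ Bernoulli(p)`, `U_m ~ U(0,1)`,
all independent, and net benefits `NB₀ = θ`, `NB₁ = 1 - θ`.  Then
`E_Y[max_d E[NB_d | Y]] - max_d E[NB_d]`
`  = (1/2) Σ_{m=0}^M C(M,m) max(p^{M-m}(1-p)^m, p^m(1-p)^{M-m}) - 1/2`. -/
theorem stmt_15 {Ω : Type*} [MeasurableSpace Ω] (μ : Measure Ω) [IsProbabilityMeasure μ]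
    (M : ℕ) (p : ℝ) (hp : p ∈ Set.Ioo (0 : ℝ) 1)
    (θ : Ω → ℝ) (b U : Ω → Fin M → ℝ)
    (hθ : Measurable θ) (hb : Measurable b) (hU : Measurable U)
    (hlaw : Measure.map (fun ω => (θ ω, b ω, U ω)) μ =
      (bernoulliReal (1 / 2)).prod
        ((Measure.pi fun _ : Fin M => bernoulliReal (ENNReal.ofReal p)).prod
          (Measure.pi fun _ : Fin M => volume.restrict (Set.Ioc (0 : ℝ) 1)))) :
    (∫ ω, max ((μ[θ | MeasurableSpace.comap
            (fun ω' k => (2 * b ω' k - 1) * U ω' k * (2 * θ ω' - 1)) inferInstance]) ω)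
          ((μ[(fun ω' => 1 - θ ω') | MeasurableSpace.comap
            (fun ω' k => (2 * b ω' k - 1) * U ω' k * (2 * θ ω' - 1)) inferInstance]) ω) ∂μ) -
        max (∫ ω, θ ω ∂μ) (∫ ω, (1 - θ ω) ∂μ) =
      (1 / 2) * ∑ m ∈ Finset.range (M + 1),
          (M.choose m : ℝ) *
            max (p ^ (M - m) * (1 - p) ^ m) (p ^ m * (1 - p) ^ (M - m)) -
        1 / 2 := by
  classical
  have hp' : p ∈ Set.Ioo (0 : ℝ) 1 := hp
  set T : Ω → ℝ × (Fin M → ℝ) × (Fin M → ℝ) := fun ω => (θ ω, b ω, U ω) with hTdef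
  have hT : Measurable T := hθ.prodMk (hb.prodMk hU)
  have hmap : Measure.map T μ = P M p := by
    show Measure.map (fun ω => (θ ω, b ω, U ω)) μ = P M p
    unfold P rho Piu unif
    exact hlaw
  set Y : Ω → Fin M → ℝ := fun ω' k => (2 * b ω' k - 1) * U ω' k * (2 * θ ω' - 1) with hYdef
  have hYT : ∀ ω, Y ω = sgnF M (T ω) := fun ω => rfl
  have hYm : Measurable Y := (measurable_sgnF M).comp hT
  have hm'le : MeasurableSpace.comap Y (inferInstance : MeasurableSpace (Fin M → ℝ)) ≤ _ :=
    hYm.comap_le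
  haveI : IsFiniteMeasure (μ.trim hm'le) := isFiniteMeasure_trim hm'le
  -- a.e. facts about θ
  have hθmem : ∀ᵐ ω ∂μ, θ ω ∈ ({0, 1} : Set ℝ) := by
    rw [ae_iff]
    have hset : {ω | ¬θ ω ∈ ({0, 1} : Set ℝ)} = T ⁻¹' (Prod.fst ⁻¹' (({0, 1} : Set ℝ)ᶜ)) := rfl
    rw [hset, ← Measure.map_apply hT (measurable_fst pair_meas.compl), hmap,
      ← Measure.map_apply measurable_fst pair_meas.compl, P_fst M hp', bern_half_compl]
  have hθbd : ∀ᵐ ω ∂μ, ‖θ ω‖ ≤ (1 : ℝ) := by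
    filter_upwards [hθmem] with ω h
    rcases h with h | h
    · rw [h]; simp
    · rw [Set.mem_singleton_iff] at h
      rw [h]; simp
  have hθtr : ∀ᵐ ω ∂μ, trunc (θ ω) = θ ω := hθmem.mono fun ω h => trunc_mem h
  have hθint : Integrable θ μ := (integrable_const (1 : ℝ)).mono' hθ.aestronglyMeasurable hθbd
  -- conditional expectation of θ
  have hcθ : (fun ω => g M p (Y ω)) =ᵐ[μ] μ[θ|MeasurableSpace.comap Y inferInstance] := by
    refine ae_eq_condExp_of_forall_setIntegral_eq hm'le hθint (fun s _ _ => ?_)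
      (fun s hs _ => ?_) ?_
    · exact (integrable_of_bdd ((measurable_g M p).comp hYm).aestronglyMeasurable
        (C := 1) (fun ω => r_abs_le hp' M _)).integrableOn
    · obtain ⟨A, hA, rfl⟩ := hs
      have hYmA : MeasurableSet (Y ⁻¹' A) := hYm hA
      rw [← integral_indicator hYmA, ← integral_indicator hYmA]
      calc ∫ ω, (Y ⁻¹' A).indicator (fun ω' => g M p (Y ω')) ω ∂μ
          = ∫ ω, A.indicator (g M p) (sgnF M (T ω)) ∂μ := by
            refine integral_congr_ae (Filter.Eventually.of_forall fun ω => ?_)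
            show (Y ⁻¹' A).indicator (fun ω' => g M p (Y ω')) ω
              = A.indicator (g M p) (sgnF M (T ω))
            rw [← hYT ω]
            exact Set.indicator_comp_right Y (g := g M p) (s := A) (x := ω)
        _ = ∫ y, A.indicator (g M p) (sgnF M y) ∂(Measure.map T μ) :=
            (integral_map hT.aemeasurable
              (((measurable_g M p).indicator hA).comp (measurable_sgnF M)).aestronglyMeasurable).symm
        _ = ∫ y, A.indicator (fun _ => (1 : ℝ)) (sgnF M y) * trunc y.1 ∂(Measure.map T μ) := by
            rw [hmap]; exact key_int M hp' hA
        _ = ∫ ω, A.indicator (fun _ => (1 : ℝ)) (sgnF M (T ω)) * trunc (θ ω) ∂μ :=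
            integral_map hT.aemeasurable
              (((measurable_const.indicator hA).comp (measurable_sgnF M)).mul
                (measurable_trunc.comp measurable_fst)).aestronglyMeasurable
        _ = ∫ ω, (Y ⁻¹' A).indicator θ ω ∂μ := by
            refine integral_congr_ae ?_
            filter_upwards [hθtr] with ω hω
            rw [hω]
            by_cases h : Y ω ∈ A
            · have h' : sgnF M (T ω) ∈ A := hYT ω ▸ h
              have h2 : ω ∈ Y ⁻¹' A := h
              rw [Set.indicator_of_mem h', Set.indicator_of_mem h2, one_mul]
            · have h' : sgnF M (T ω) ∉ A := fun hc => h (by rw [hYT ω]; exact hc)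
              have h2 : ω ∉ Y ⁻¹' A := h
              rw [Set.indicator_of_notMem h', Set.indicator_of_notMem h2, zero_mul]
    · have hYm' : Measurable[MeasurableSpace.comap Y inferInstance] Y := fun t ht => ⟨t, ht, rfl⟩
      exact StronglyMeasurable.aestronglyMeasurable
        (Measurable.stronglyMeasurable ((measurable_g M p).comp hYm'))
  -- conditional expectation of 1 - θ
  have hc1 : μ[(fun ω' => 1 - θ ω')|MeasurableSpace.comap Y inferInstance] =ᵐ[μ] fun ω => 1 - g M p (Y ω) := by
    have h1 : μ[(fun ω' => 1 - θ ω')|MeasurableSpace.comap Y inferInstance] =ᵐ[μ] μ[(fun _ => (1 : ℝ))|MeasurableSpace.comap Y inferInstance] - μ[θ|MeasurableSpace.comap Y inferInstance] := by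
      have he : (fun ω' => 1 - θ ω') = (fun _ => (1 : ℝ)) - θ := rfl
      rw [he]
      exact condExp_sub (integrable_const 1) hθint _
    have h2 := condExp_const hm'le (1 : ℝ) (μ := μ)
    filter_upwards [h1, hcθ] with ω hω1 hω2
    rw [hω1, Pi.sub_apply, h2, ← hω2]
  -- the main integral
  have hmain : ∫ ω, max ((μ[θ|(MeasurableSpace.comap Y inferInstance)]) ω) ((μ[(fun ω' => 1 - θ ω')|(MeasurableSpace.comap Y inferInstance)]) ω) ∂μ
      = 2⁻¹ * ∑ m ∈ Finset.range (M + 1), (M.choose m : ℝ) *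
          max (p ^ (M - m) * (1 - p) ^ m) (p ^ m * (1 - p) ^ (M - m)) := by
    have he : ∫ ω, max ((μ[θ|(MeasurableSpace.comap Y inferInstance)]) ω) ((μ[(fun ω' => 1 - θ ω')|(MeasurableSpace.comap Y inferInstance)]) ω) ∂μ
        = ∫ ω, max (g M p (Y ω)) (1 - g M p (Y ω)) ∂μ := by
      refine integral_congr_ae ?_
      filter_upwards [hcθ, hc1] with ω h1 h2
      rw [← h1, h2]
    have h3 : ∫ ω, max (g M p (Y ω)) (1 - g M p (Y ω)) ∂μ
        = ∫ y, max (g M p (sgnF M y)) (1 - g M p (sgnF M y)) ∂(Measure.map T μ) :=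
      (integral_map hT.aemeasurable
        (((measurable_g M p).max (measurable_const.sub (measurable_g M p))).comp
          (measurable_sgnF M)).aestronglyMeasurable).symm
    rw [he, h3, hmap, final_int M hp']
  -- the baselines
  have hbase : ∫ ω, θ ω ∂μ = 1 / 2 := by
    have h1 : ∫ ω, θ ω ∂μ = ∫ y : ℝ × (Fin M → ℝ) × (Fin M → ℝ), y.1 ∂(Measure.map T μ) :=
      (integral_map hT.aemeasurable measurable_fst.aestronglyMeasurable).symm
    have h2 : ∫ y : ℝ × (Fin M → ℝ) × (Fin M → ℝ), y.1 ∂(P M p)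
        = ∫ t, t ∂(Measure.map Prod.fst (P M p)) :=
      (integral_map measurable_fst.aemeasurable measurable_id.aestronglyMeasurable).symm
    rw [h1, hmap, h2, P_fst M hp', bern_half_int]
  have hbase1 : ∫ ω, (1 - θ ω) ∂μ = 1 / 2 := by
    rw [integral_sub (integrable_const 1) hθint, integral_const, probReal_univ, hbase]
    norm_num
  rw [hmain, hbase, hbase1, max_self]
  norm_num
end
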